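/- For every 2 ≤ r ≤ n, there exists a family 𝒢 of r-uniform hypergraphs on [n] of size exactly 2^{f_r(n)} such that for every G₁, G₂ ∈ 𝒢 the hypergraphs G₁ \ G₂ and G₂ \ G₁ are isomorphic (in fact, related by a single fixed involution of [n]). -/

import Mathlib

/-- f_r(n) from the paper. -/
def fr (n r : ℕ) : ℕ :=
  if r % 2 = 1 ∧ n % 2 = 0 then n.choose r / 2
  else (n.choose r - (n / 2).choose (r / 2)) / 2

/-!
Let `ψ` swap `2i ↔ 2i + 1` (fixing `n - 1` when `n` is odd) and let `σ = image ψ` act on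
`r`-sets. From each `2`-cycle `{e, σ e}` pick the colex-smaller set, and let `T` be the set of
picks. For `A ⊆ T` the hypergraph `G_A = A ∪ σ (T \ A)` has exactly one edge from every
`2`-cycle, and `G_A \ G_B = (A \ B) ∪ σ (B \ A)`, which `σ` maps onto `G_B \ G_A`. The `G_A` are
pairwise distinct, so there are `2 ^ |T|` of them, and `2 |T| = C(n, r) - #(σ-fixed r-sets)`.
A `σ`-fixed `r`-set is a union of `⌊r/2⌋` pairs `{2i, 2i + 1}`, plus the fixed point of `ψ` when
`r` is odd; so there are none when `r` is odd and `n` even, and `C(⌊n/2⌋, ⌊r/2⌋)` otherwise.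
-/

open Finset Function

lemma Finset.image_eq_self_iff_forall_mem {α : Type*} [DecidableEq α] {f : α → α}
    (hf : Injective f) {s : Finset α} : s.image f = s ↔ ∀ x ∈ s, f x ∈ s :=
  ⟨fun h _ hx => h ▸ mem_image_of_mem f hx, fun h =>
    eq_of_subset_of_card_le (image_subset_iff.2 h) (card_image_of_injective s hf).ge⟩

lemma Finset.image_mem_powersetCard_univ {α : Type*} [Fintype α] [DecidableEq α] {f : α → α}
    (hf : Injective f) {r : ℕ} {s : Finset α} (hs : s ∈ powersetCard r univ) :
    s.image f ∈ powersetCard r univ := by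
  rwa [mem_powersetCard_univ, card_image_of_injective s hf, ← mem_powersetCard_univ]

lemma Function.Involutive.finset_image {α : Type*} [DecidableEq α] {f : α → α}
    (hf : Involutive f) : Involutive (image f) := fun s => by
  rw [image_image, hf.comp_self, image_id]

section Transversal

variable {α : Type*} [DecidableEq α] {σ : α → α} {T A B : Finset α}

def transversal (σ : α → α) (T A : Finset α) : Finset α := A ∪ (T \ A).image σ

lemma transversal_subset (hA : A ⊆ T) : transversal σ T A ⊆ T ∪ T.image σ :=
  union_subset_union hA (image_subset_image sdiff_subset)

lemma transversal_sdiff_transversal (hσ : Injective σ) (hT : Disjoint T (T.image σ))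
    (hA : A ⊆ T) (hB : B ⊆ T) :
    transversal σ T A \ transversal σ T B = A \ B ∪ (B \ A).image σ := by
  have hT' : ∀ x ∈ T, ∀ y ∈ T, σ y ≠ x := fun x hx y hy h =>
    disjoint_left.1 hT hx (h ▸ mem_image_of_mem σ hy)
  ext x
  simp only [transversal, mem_sdiff, mem_union, mem_image]
  grind

lemma image_transversal_sdiff_transversal (hσ : Involutive σ) (hT : Disjoint T (T.image σ))
    (hA : A ⊆ T) (hB : B ⊆ T) :
    (transversal σ T A \ transversal σ T B).image σ = transversal σ T B \ transversal σ T A := by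
  rw [transversal_sdiff_transversal hσ.injective hT hA hB,
    transversal_sdiff_transversal hσ.injective hT hB hA, image_union, image_image,
    hσ.comp_self, image_id, union_comm]

lemma transversal_inter_self (hT : Disjoint T (T.image σ)) (hA : A ⊆ T) :
    transversal σ T A ∩ T = A := by
  rw [transversal, union_inter_distrib_right, inter_eq_left.2 hA,
    disjoint_iff_inter_eq_empty.1 ((hT.mono_right (image_subset_image sdiff_subset)).symm),
    union_empty]

lemma card_image_transversal_powerset (hT : Disjoint T (T.image σ)) :
    #(T.powerset.image (transversal σ T)) = 2 ^ #T := by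
  rw [card_image_of_injOn, card_powerset]
  intro A hA B hB hAB
  rw [← transversal_inter_self hT (mem_powerset.1 hA),
    ← transversal_inter_self hT (mem_powerset.1 hB), hAB]

end Transversal

section LowerHalf

variable {α β : Type*} [DecidableEq α] [LinearOrder β] {σ : α → α} {key : α → β} {s : Finset α}

def lowerHalf (σ : α → α) (key : α → β) (s : Finset α) : Finset α :=
  {x ∈ s | key x < key (σ x)}

lemma disjoint_lowerHalf_image (hσ : Involutive σ) :
    Disjoint (lowerHalf σ key s) ((lowerHalf σ key s).image σ) := by
  simp only [disjoint_left, lowerHalf, mem_image, mem_filter]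
  rintro _ ⟨-, hx⟩ ⟨y, ⟨-, hy⟩, rfl⟩
  rw [hσ y] at hx
  exact lt_asymm hx hy

lemma card_eq_card_filter_fixed_add_two_mul_card_lowerHalf (hσ : Involutive σ)
    (hkey : Injective key) (hs : ∀ x ∈ s, σ x ∈ s) :
    #s = #{x ∈ s | σ x = x} + 2 * #(lowerHalf σ key s) := by
  have hmoved : {x ∈ s | ¬σ x = x} = lowerHalf σ key s ∪ (lowerHalf σ key s).image σ := by
    ext x
    simp only [lowerHalf, mem_filter, mem_union, mem_image]
    constructor
    · rintro ⟨hx, hne⟩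
      rcases lt_or_gt_of_ne (hkey.ne (Ne.symm hne)) with hlt | hgt
      · exact Or.inl ⟨hx, hlt⟩
      · exact Or.inr ⟨σ x, ⟨hs x hx, by rwa [hσ x]⟩, hσ x⟩
    · rintro (⟨hx, hlt⟩ | ⟨y, ⟨hy, hlt⟩, rfl⟩)
      · exact ⟨hx, fun h => hlt.ne (by rw [h])⟩
      · exact ⟨hs y hy, fun h => hlt.ne (congrArg key ((hσ y).symm.trans h))⟩
  rw [← card_filter_add_card_filter_not (fun x => σ x = x), hmoved,
    card_union_of_disjoint (disjoint_lowerHalf_image hσ), card_image_of_injective _ hσ.injective,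
    two_mul]

lemma union_image_lowerHalf_subset (hs : ∀ x ∈ s, σ x ∈ s) :
    lowerHalf σ key s ∪ (lowerHalf σ key s).image σ ⊆ s :=
  union_subset (filter_subset _ _) (image_subset_iff.2 fun x hx => hs x (mem_filter.1 hx).1)

end LowerHalf

def pairPartner (n k : ℕ) : ℕ :=
  if k % 2 = 1 then k - 1 else if k + 1 < n then k + 1 else k

lemma pairPartner_lt {n k : ℕ} (hk : k < n) : pairPartner n k < n := by
  unfold pairPartner; split_ifs <;> omega

lemma pairPartner_pairPartner {n k : ℕ} (hk : k < n) : pairPartner n (pairPartner n k) = k := by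
  unfold pairPartner; split_ifs <;> omega

def pairSwap (n : ℕ) : Equiv.Perm (Fin n) :=
  Involutive.toPerm (fun x => ⟨pairPartner n x, pairPartner_lt x.2⟩)
    fun x => Fin.ext (pairPartner_pairPartner x.2)

namespace pairSwap

variable {n : ℕ}

lemma involutive (n : ℕ) : Involutive (pairSwap n) :=
  fun x => Fin.ext (pairPartner_pairPartner x.2)

lemma val_apply (x : Fin n) : (pairSwap n x : ℕ) = pairPartner n x := rfl

lemma val_apply_div_two (x : Fin n) : (pairSwap n x : ℕ) / 2 = x / 2 := by
  rw [val_apply, pairPartner]; split_ifs <;> omega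

lemma apply_eq_self_iff {x : Fin n} : pairSwap n x = x ↔ n / 2 ≤ x / 2 := by
  have := x.2
  rw [Fin.ext_iff, val_apply, pairPartner]; split_ifs <;> omega

lemma eq_or_eq_of_div_two_eq {x y : Fin n} (h : (y : ℕ) / 2 = x / 2) :
    y = x ∨ y = pairSwap n x := by
  have := x.2; have := y.2
  rw [Fin.ext_iff, Fin.ext_iff, val_apply, pairPartner]; split_ifs <;> omega

end pairSwap

section InvariantSets

variable {n : ℕ}

def unionPairs (n : ℕ) (P : Finset ℕ) : Finset (Fin n) := {x | (x : ℕ) / 2 ∈ P}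

def fixedPts (n : ℕ) : Finset (Fin n) := {x | pairSwap n x = x}

def pairIndices (e : Finset (Fin n)) : Finset ℕ :=
  {j ∈ e.image fun x : Fin n => (x : ℕ) / 2 | j < n / 2}

lemma pairIndices_subset_range (e : Finset (Fin n)) : pairIndices e ⊆ range (n / 2) := by
  intro j; simp [pairIndices]

lemma card_unionPairs {P : Finset ℕ} (hP : P ⊆ range (n / 2)) : #(unionPairs n P) = 2 * #P := by
  rw [mul_comm, ← card_range 2, ← card_product]
  refine card_bij' (fun x _ => ((x : ℕ) / 2, (x : ℕ) % 2))
    (fun p hp => ⟨2 * p.1 + p.2, ?_⟩) ?_ ?_ ?_ ?_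
  · simp only [mem_product, mem_range] at hp
    have := mem_range.1 (hP hp.1); omega
  · intro x hx; simp only [unionPairs, mem_filter, mem_univ, true_and] at hx
    simp only [mem_product, mem_range]; exact ⟨hx, by omega⟩
  · intro p hp; simp only [mem_product, mem_range] at hp
    simp only [unionPairs, mem_filter, mem_univ, true_and]
    convert hp.1 using 1; omega
  · intro x hx; ext; simp only; omega
  · intro p hp; simp only [mem_product, mem_range] at hp
    ext <;> simp only <;> omega

lemma card_fixedPts : #(fixedPts n) = n % 2 := by
  rcases Nat.mod_two_eq_zero_or_one n with h | h
  · rw [h, card_eq_zero, eq_empty_iff_forall_notMem]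
    intro x; have := x.2
    simp only [fixedPts, mem_filter, mem_univ, true_and, pairSwap.apply_eq_self_iff]; omega
  · rw [h, card_eq_one]
    refine ⟨⟨n - 1, by omega⟩, ?_⟩
    ext x; have := x.2
    simp only [fixedPts, mem_filter, mem_univ, true_and, pairSwap.apply_eq_self_iff,
      mem_singleton]
    simp only [Fin.ext_iff]
    omega

lemma disjoint_unionPairs_fixedPts {P : Finset ℕ} (hP : P ⊆ range (n / 2)) :
    Disjoint (unionPairs n P) (fixedPts n) := by
  simp only [disjoint_left, unionPairs, fixedPts, mem_filter, mem_univ, true_and,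
    pairSwap.apply_eq_self_iff]
  intro x hx; have := mem_range.1 (hP hx); omega

lemma image_unionPairs (P : Finset ℕ) :
    (unionPairs n P).image (pairSwap n) = unionPairs n P := by
  rw [image_eq_self_iff_forall_mem (pairSwap n).injective]
  simp [unionPairs, pairSwap.val_apply_div_two]

lemma image_fixedPts : (fixedPts n).image (pairSwap n) = fixedPts n := by
  rw [image_eq_self_iff_forall_mem (pairSwap n).injective]
  simp [fixedPts]

lemma eq_unionPairs_union_inter_fixedPts {e : Finset (Fin n)} (he : e.image (pairSwap n) = e) :
    e = unionPairs n (pairIndices e) ∪ e ∩ fixedPts n := by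
  rw [image_eq_self_iff_forall_mem (pairSwap n).injective] at he
  ext x
  simp only [unionPairs, pairIndices, fixedPts, mem_union, mem_inter, mem_filter, mem_univ,
    true_and, mem_image, pairSwap.apply_eq_self_iff]
  constructor
  · intro hx
    by_cases h : (x : ℕ) / 2 < n / 2
    · exact Or.inl ⟨⟨x, hx, rfl⟩, h⟩
    · exact Or.inr ⟨hx, by omega⟩
  · rintro (⟨⟨y, hy, hyx⟩, -⟩ | ⟨hx, -⟩)
    · rcases pairSwap.eq_or_eq_of_div_two_eq hyx.symm with rfl | rfl
      exacts [hy, he y hy]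
    · exact hx

lemma card_eq_of_image_pairSwap_eq_self {e : Finset (Fin n)} (he : e.image (pairSwap n) = e) :
    #e = 2 * #(pairIndices e) + #(e ∩ fixedPts n) := by
  conv_lhs => rw [eq_unionPairs_union_inter_fixedPts he]
  have hP := pairIndices_subset_range e
  rw [card_union_of_disjoint ((disjoint_unionPairs_fixedPts hP).mono_right inter_subset_right),
    card_unionPairs hP]

def invariantOfPairs (n r : ℕ) (P : Finset ℕ) : Finset (Fin n) :=
  unionPairs n P ∪ if r % 2 = 1 then fixedPts n else ∅

lemma card_invariantOfPairs {r : ℕ} (hpar : r % 2 = 1 → n % 2 = 1) {P : Finset ℕ}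
    (hP : P ⊆ range (n / 2)) : #(invariantOfPairs n r P) = 2 * #P + r % 2 := by
  rw [invariantOfPairs, card_union_of_disjoint, card_unionPairs hP]
  · split_ifs with h
    · rw [card_fixedPts, hpar h, h]
    · rw [card_empty]; omega
  · split_ifs
    exacts [disjoint_unionPairs_fixedPts hP, disjoint_empty_right _]

lemma image_invariantOfPairs (r : ℕ) (P : Finset ℕ) :
    (invariantOfPairs n r P).image (pairSwap n) = invariantOfPairs n r P := by
  rw [invariantOfPairs, image_union, image_unionPairs]
  split_ifs
  exacts [by rw [image_fixedPts], by rw [image_empty]]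

lemma pairIndices_invariantOfPairs (r : ℕ) {P : Finset ℕ} (hP : P ⊆ range (n / 2)) :
    pairIndices (invariantOfPairs n r P) = P := by
  ext j
  simp only [pairIndices, invariantOfPairs, unionPairs, mem_filter, mem_image, mem_union,
    mem_univ, true_and]
  constructor
  · rintro ⟨⟨x, hx, rfl⟩, hlt⟩
    rcases hx with hx | hx
    · exact hx
    · split_ifs at hx
      · simp only [fixedPts, mem_filter, mem_univ, true_and, pairSwap.apply_eq_self_iff] at hx
        omega
      · exact absurd hx (notMem_empty x)
  · intro hj
    have := mem_range.1 (hP hj)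
    exact ⟨⟨⟨2 * j, by omega⟩, Or.inl (by simpa using hj), by simp⟩, this⟩

lemma card_inter_fixedPts_le (e : Finset (Fin n)) : #(e ∩ fixedPts n) ≤ n % 2 :=
  card_fixedPts (n := n) ▸ card_le_card inter_subset_right

lemma invariantOfPairs_pairIndices {r : ℕ} {e : Finset (Fin n)} (he : e.image (pairSwap n) = e)
    (hr : #e = r) : invariantOfPairs n r (pairIndices e) = e := by
  have hcard := card_eq_of_image_pairSwap_eq_self he
  have hfix := card_inter_fixedPts_le e
  conv_rhs => rw [eq_unionPairs_union_inter_fixedPts he]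
  rw [invariantOfPairs]
  congr 1
  split_ifs with hodd
  · exact (eq_of_subset_of_card_le inter_subset_right (by rw [card_fixedPts]; omega)).symm
  · exact (card_eq_zero.1 (by omega)).symm

theorem card_filter_image_pairSwap_eq_self (n r : ℕ) :
    #((powersetCard r univ).filter fun e : Finset (Fin n) => e.image (pairSwap n) = e) =
      if r % 2 = 1 ∧ n % 2 = 0 then 0 else (n / 2).choose (r / 2) := by
  split_ifs with h
  · rw [card_eq_zero, filter_eq_empty_iff]
    intro e he hinv
    have := card_eq_of_image_pairSwap_eq_self hinv
    have := card_inter_fixedPts_le e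
    rw [mem_powersetCard_univ] at he
    omega
  · have hpar : r % 2 = 1 → n % 2 = 1 := by omega
    conv_rhs => rw [← card_range (n / 2), ← card_powersetCard]
    symm
    refine card_nbij (invariantOfPairs n r) ?_ ?_ ?_
    · intro P hP
      rw [mem_coe, mem_powersetCard] at hP
      rw [mem_coe, mem_filter, mem_powersetCard_univ, card_invariantOfPairs hpar hP.1, hP.2]
      exact ⟨by omega, image_invariantOfPairs r P⟩
    · intro P hP Q hQ hPQ
      rw [← pairIndices_invariantOfPairs r (mem_powersetCard.1 hP).1,
        ← pairIndices_invariantOfPairs r (mem_powersetCard.1 hQ).1, hPQ]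
    · intro e he
      rw [mem_coe, mem_filter, mem_powersetCard_univ] at he
      have hcard := card_eq_of_image_pairSwap_eq_self he.2
      have hfix := card_inter_fixedPts_le e
      refine ⟨pairIndices e, ?_, invariantOfPairs_pairIndices he.2 he.1⟩
      rw [mem_coe, mem_powersetCard]
      exact ⟨pairIndices_subset_range e, by omega⟩

end InvariantSets

lemma card_lowerHalf_pairSwap (n r : ℕ) :
    #(lowerHalf (image (pairSwap n)) toColex (powersetCard r (univ : Finset (Fin n)))) =
      fr n r := by
  have h := card_eq_card_filter_fixed_add_two_mul_card_lowerHalf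
    (s := powersetCard r (univ : Finset (Fin n)))
    (pairSwap.involutive n).finset_image toColex.injective
    fun _ => image_mem_powersetCard_univ (pairSwap n).injective
  rw [card_powersetCard, card_univ, Fintype.card_fin, card_filter_image_pairSwap_eq_self] at h
  unfold fr
  split_ifs at h ⊢ <;> omega

theorem stmt_8_general (n r : ℕ) :
    ∃ 𝒢 : Finset (Finset (Finset (Fin n))),
      (∀ G ∈ 𝒢, ∀ e ∈ G, e.card = r) ∧
      𝒢.card = 2 ^ fr n r ∧
      ∃ ψ : Equiv.Perm (Fin n), (∀ x, ψ (ψ x) = x) ∧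
        ∀ G₁ ∈ 𝒢, ∀ G₂ ∈ 𝒢, (G₁ \ G₂).image (Finset.image ψ) = G₂ \ G₁ := by
  set σ : Finset (Fin n) → Finset (Fin n) := image (pairSwap n)
  set T := lowerHalf σ toColex (powersetCard r univ)
  have hσ : Involutive σ := (pairSwap.involutive n).finset_image
  have hT : Disjoint T (T.image σ) := disjoint_lowerHalf_image hσ
  have hTs : T ∪ T.image σ ⊆ powersetCard r univ :=
    union_image_lowerHalf_subset fun _ => image_mem_powersetCard_univ (pairSwap n).injective
  refine ⟨T.powerset.image (transversal σ T), ?_, ?_, pairSwap n, pairSwap.involutive n, ?_⟩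
  · simp only [mem_image, mem_powerset]
    rintro _ ⟨A, hA, rfl⟩ e he
    exact mem_powersetCard_univ.1 (hTs (transversal_subset hA he))
  · rw [card_image_transversal_powerset hT, card_lowerHalf_pairSwap]
  · simp only [mem_image, mem_powerset]
    rintro _ ⟨A, hA, rfl⟩ _ ⟨B, hB, rfl⟩
    exact image_transversal_sdiff_transversal hσ hT hA hB

/-- for 2 ≤ r ≤ n there is a difference-isomorphic family of r-graphs on [n]
of size exactly 2^{f_r(n)}, all differences being witnessed by a single involution. -/
theorem stmt_8 (n r : ℕ) (hr : 2 ≤ r) (hrn : r ≤ n) :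
    ∃ 𝒢 : Finset (Finset (Finset (Fin n))),
      (∀ G ∈ 𝒢, ∀ e ∈ G, e.card = r) ∧
      𝒢.card = 2 ^ fr n r ∧
      ∃ ψ : Equiv.Perm (Fin n), (∀ x, ψ (ψ x) = x) ∧
        ∀ G₁ ∈ 𝒢, ∀ G₂ ∈ 𝒢, (G₁ \ G₂).image (Finset.image ψ) = G₂ \ G₁ :=
  stmt_8_general n r
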